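/- For holomorphic f₁, f₂ with nonvanishing derivatives, (B_{S(f₁)}[F,G])∘f₂ = B_{S(f₁∘f₂)}[(F∘f₂)/f₂', (G∘f₂)/f₂']. -/

import Mathlib

/-- The bilinear form `B_q[F,G] = F''G + FG'' − F'G' + 2qFG`. -/
noncomputable def Bform (q F G : ℂ → ℂ) (z : ℂ) : ℂ :=
  deriv (deriv F) z * G z + F z * deriv (deriv G) z
    - deriv F z * deriv G z + 2 * q z * F z * G z

/-- The Schwarzian derivative `S(f) = f'''/f' - (3/2)(f''/f')²`. -/
noncomputable def schwarzian (f : ℂ → ℂ) (z : ℂ) : ℂ :=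
  deriv (deriv (deriv f)) z / deriv f z - (3/2) * (deriv (deriv f) z / deriv f z) ^ 2

/-!
The Schwarzian satisfies the cocycle rule `S(f₁ ∘ f₂) = (S(f₁) ∘ f₂) · f₂'² + S(f₂)`. Transporting
`F` to `H = (F ∘ f₂) / f₂'` produces, in `H''`, correction terms in `f₂''` and `f₂'''`; in
`B_q[H_F, H_G]` these cancel against `2 S(f₂) H_F H_G` exactly, while the factor `f₂'²` in front
of `S(f₁) ∘ f₂` compensates the two divisions by `f₂'`.
-/

section Composition

variable {f g F G : ℂ → ℂ}

lemma hasDerivAt_comp_of_differentiable (hf : Differentiable ℂ f) (hg : Differentiable ℂ g)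
    (w : ℂ) : HasDerivAt (fun z => f (g z)) (deriv f (g w) * deriv g w) w :=
  (hf (g w)).hasDerivAt.comp w (hg w).hasDerivAt

lemma deriv_comp_eq (hf : Differentiable ℂ f) (hg : Differentiable ℂ g) :
    deriv (f ∘ g) = fun w => deriv f (g w) * deriv g w :=
  funext fun w => (hasDerivAt_comp_of_differentiable hf hg w).deriv

lemma deriv_deriv_comp_eq (hf : Differentiable ℂ f) (hg : Differentiable ℂ g) :
    deriv (deriv (f ∘ g)) = fun w =>
      deriv (deriv f) (g w) * deriv g w ^ 2 + deriv f (g w) * deriv (deriv g) w := by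
  rw [deriv_comp_eq hf hg]
  funext w
  exact (((hasDerivAt_comp_of_differentiable hf.deriv hg w).mul
    (hg.deriv w).hasDerivAt).deriv).trans (by ring)

lemma deriv_deriv_deriv_comp (hf : Differentiable ℂ f) (hg : Differentiable ℂ g) (z : ℂ) :
    deriv (deriv (deriv (f ∘ g))) z =
      deriv (deriv (deriv f)) (g z) * deriv g z ^ 3
        + 3 * deriv (deriv f) (g z) * deriv g z * deriv (deriv g) z
        + deriv f (g z) * deriv (deriv (deriv g)) z := by
  rw [deriv_deriv_comp_eq hf hg]
  have hsq := ((hasDerivAt_comp_of_differentiable hf.deriv.deriv hg z).mul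
    ((hg.deriv z).hasDerivAt.pow 2))
  have hlin := (hasDerivAt_comp_of_differentiable hf.deriv hg z).mul
    (hg.deriv.deriv z).hasDerivAt
  exact ((hsq.add hlin).deriv).trans (by simp only [Pi.pow_apply]; push_cast; ring)

theorem schwarzian_comp (hf : Differentiable ℂ f) (hg : Differentiable ℂ g) {z : ℂ}
    (hfz : deriv f (g z) ≠ 0) (hgz : deriv g z ≠ 0) :
    schwarzian (f ∘ g) z = schwarzian f (g z) * deriv g z ^ 2 + schwarzian g z := by
  rw [schwarzian, schwarzian, schwarzian, deriv_deriv_deriv_comp hf hg,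
    deriv_deriv_comp_eq hf hg, deriv_comp_eq hf hg]
  field_simp
  ring

lemma deriv_comp_div_deriv (hF : Differentiable ℂ F) (hf : Differentiable ℂ f)
    (hf' : ∀ w, deriv f w ≠ 0) :
    deriv (fun w => F (f w) / deriv f w) =
      fun w => deriv F (f w) - F (f w) * deriv (deriv f) w / deriv f w ^ 2 := by
  funext w
  have hw := hf' w
  exact (((hasDerivAt_comp_of_differentiable hF hf w).div (hf.deriv w).hasDerivAt
    hw).deriv).trans (by field_simp)

lemma deriv_deriv_comp_div_deriv (hF : Differentiable ℂ F) (hf : Differentiable ℂ f)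
    (hf' : ∀ w, deriv f w ≠ 0) (z : ℂ) :
    deriv (deriv (fun w => F (f w) / deriv f w)) z =
      deriv (deriv F) (f z) * deriv f z - deriv F (f z) * deriv (deriv f) z / deriv f z
        - F (f z) * (deriv (deriv (deriv f)) z / deriv f z ^ 2
          - 2 * deriv (deriv f) z ^ 2 / deriv f z ^ 3) := by
  rw [deriv_comp_div_deriv hF hf hf']
  have hquot := ((hasDerivAt_comp_of_differentiable hF hf z).mul
    (hf.deriv.deriv z).hasDerivAt).div ((hf.deriv z).hasDerivAt.pow 2) (pow_ne_zero 2 (hf' z))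
  have hz := hf' z
  exact (((hasDerivAt_comp_of_differentiable hF.deriv hf z).sub hquot).deriv).trans
    (by simp only [Pi.mul_apply, Pi.pow_apply]; push_cast; field_simp; ring)

theorem Bform_comp_div_deriv (q : ℂ → ℂ) (hF : Differentiable ℂ F) (hG : Differentiable ℂ G)
    (hf : Differentiable ℂ f) (hf' : ∀ w, deriv f w ≠ 0) (z : ℂ) :
    Bform (fun w => q (f w) * deriv f w ^ 2 + schwarzian f w)
        (fun w => F (f w) / deriv f w) (fun w => G (f w) / deriv f w) z
      = Bform q F G (f z) := by
  have hz := hf' z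
  rw [Bform, deriv_deriv_comp_div_deriv hF hf hf', deriv_deriv_comp_div_deriv hG hf hf',
    deriv_comp_div_deriv hF hf hf', deriv_comp_div_deriv hG hf hf', Bform, schwarzian]
  field_simp
  ring

end Composition

/-- `(B_{S(f₁)}[F,G]) ∘ f₂ = B_{S(f₁∘f₂)}[(F∘f₂)/f₂', (G∘f₂)/f₂']`. -/
theorem Bform_composition (f₁ f₂ F G : ℂ → ℂ)
    (hf₁ : Differentiable ℂ f₁) (hf₁' : ∀ z, deriv f₁ z ≠ 0)
    (hf₂ : Differentiable ℂ f₂) (hf₂' : ∀ z, deriv f₂ z ≠ 0)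
    (hF : Differentiable ℂ F) (hG : Differentiable ℂ G) :
    ∀ z, Bform (schwarzian f₁) F G (f₂ z)
      = Bform (schwarzian (f₁ ∘ f₂))
          (fun w => F (f₂ w) / deriv f₂ w) (fun w => G (f₂ w) / deriv f₂ w) z := by
  intro z
  have hS : schwarzian (f₁ ∘ f₂) =
      fun w => schwarzian f₁ (f₂ w) * deriv f₂ w ^ 2 + schwarzian f₂ w :=
    funext fun w => schwarzian_comp hf₁ hf₂ (hf₁' (f₂ w)) (hf₂' w)
  rw [hS, Bform_comp_div_deriv _ hF hG hf₂ hf₂']
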